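/- Let S = (R_i)_{i∈I} be a family of fuzzy relations on U and X_0 a fuzzy preorder on U. For k ∈ {1,2,3}, define the sequence X^k_0 = X_0 and X^k_{n+1} = X^k_n ⊓ F_k(X^k_n). Then for every x ∈ L and every n: x ≤ SD_k(S)(X^k_n) if and only if x ≤ (X^k_n ≈ X^k_{n+1}). -/
import Mathlib


/-- A complete residuated lattice: a complete lattice with a commutative monoid
operation `otimes` whose unit is the top element, distributing over arbitrary
suprema, together with its residuum `res` characterized by the adjunction. -/
class CRL (L : Type*) extends CompleteLattice L where
  /-- the multiplication ⊗ -/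
  otimes : L → L → L
  otimes_comm : ∀ a b : L, otimes a b = otimes b a
  otimes_assoc : ∀ a b c : L, otimes (otimes a b) c = otimes a (otimes b c)
  otimes_top : ∀ a : L, otimes a ⊤ = a
  otimes_sSup : ∀ (a : L) (s : Set L), otimes a (sSup s) = ⨆ b ∈ s, otimes a b
  /-- the residuum → -/
  res : L → L → L
  otimes_le_iff : ∀ a b c : L, otimes a b ≤ c ↔ a ≤ res b c

variable {L : Type*} [CRL L] {U : Type*}

/-- The biresiduum x ↔ y = (x → y) ⊓ (y → x). -/
def bres (a b : L) : L := CRL.res a b ⊓ CRL.res b a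

/-- Composition of fuzzy relations: (R ∘ P)(u,v) = ⨆ w, R(u,w) ⊗ P(w,v). -/
def fcomp (R P : U → U → L) : U → U → L :=
  fun u v => ⨆ w, CRL.otimes (R u w) (P w v)

/-- Inclusion degree of fuzzy relations: R ≲ Q. -/
def incl (R Q : U → U → L) : L := ⨅ u, ⨅ v, CRL.res (R u v) (Q u v)

/-- Equality degree of fuzzy relations: R ≈ Q. -/
def eqd (R Q : U → U → L) : L := ⨅ u, ⨅ v, bres (R u v) (Q u v)

/-- SD_1(S)(X) = ⨅ i, ((X ∘ R_i) ≲ (R_i ∘ X)). -/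
def SD1 {I : Type*} (S : I → U → U → L) (X : U → U → L) : L :=
  ⨅ i, incl (fcomp X (S i)) (fcomp (S i) X)

/-- SD_2(S)(X) = ⨅ i, ((R_i ∘ X) ≲ (X ∘ R_i)). -/
def SD2 {I : Type*} (S : I → U → U → L) (X : U → U → L) : L :=
  ⨅ i, incl (fcomp (S i) X) (fcomp X (S i))

/-- SD_3(S)(X) = SD_1(S)(X) ⊓ SD_2(S)(X). -/
def SD3 {I : Type*} (S : I → U → U → L) (X : U → U → L) : L :=
  SD1 S X ⊓ SD2 S X

/-- The left residual Q / R : (Q / R)(u,v) = ⨅ w, R(v,w) → Q(u,w). -/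
def lres (Q R : U → U → L) : U → U → L := fun u v => ⨅ w, CRL.res (R v w) (Q u w)

/-- The right residual R \\ Q : (R \\ Q)(u,v) = ⨅ w, R(w,u) → Q(w,v). -/
def rres (R Q : U → U → L) : U → U → L := fun u v => ⨅ w, CRL.res (R w u) (Q w v)

/-- A fuzzy preorder: reflexive (P(u,u) = 1 = ⊤) and transitive (P ∘ P ≤ P). -/
def IsFuzzyPreorder (P : U → U → L) : Prop :=
  (∀ u, P u u = ⊤) ∧ fcomp P P ≤ P

/-- F_1(X) = ⨅ i, (R_i ∘ X) / (R_i ∘ X). -/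
def F1 {I : Type*} (S : I → U → U → L) (X : U → U → L) : U → U → L :=
  ⨅ i, lres (fcomp (S i) X) (fcomp (S i) X)

/-- F_2(X) = ⨅ i, (X ∘ R_i) \\ (X ∘ R_i). -/
def F2 {I : Type*} (S : I → U → U → L) (X : U → U → L) : U → U → L :=
  ⨅ i, rres (fcomp X (S i)) (fcomp X (S i))

/-- F_3(X) = F_1(X) ⊓ F_2(X). -/
def F3 {I : Type*} (S : I → U → U → L) (X : U → U → L) : U → U → L :=
  F1 S X ⊓ F2 S X


section Aux
variable {L : Type*} [CRL L] {U : Type*}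

local instance : Std.Associative (α := L) CRL.otimes := ⟨CRL.otimes_assoc⟩
local instance : Std.Commutative (α := L) CRL.otimes := ⟨CRL.otimes_comm⟩

lemma le_res_iff {a b c : L} : a ≤ CRL.res b c ↔ CRL.otimes a b ≤ c :=
  (CRL.otimes_le_iff a b c).symm

lemma res_eq_top_of_le {a b : L} (h : a ≤ b) : CRL.res a b = ⊤ :=
  eq_top_iff.mpr (le_res_iff.mpr (by rw [CRL.otimes_comm, CRL.otimes_top]; exact h))

lemma res_self (a : L) : CRL.res a a = ⊤ := res_eq_top_of_le le_rfl

lemma otimes_mono_right (a : L) {b c : L} (h : b ≤ c) :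
    CRL.otimes a b ≤ CRL.otimes a c := by
  have h1 : c = sSup {b, c} := by rw [sSup_pair, sup_eq_right.mpr h]
  calc CRL.otimes a b ≤ ⨆ x ∈ ({b, c} : Set L), CRL.otimes a x := by
        exact le_biSup _ (by simp)
    _ = CRL.otimes a (sSup {b, c}) := (CRL.otimes_sSup a _).symm
    _ = CRL.otimes a c := by rw [← h1]

lemma otimes_mono_left {a b : L} (c : L) (h : a ≤ b) :
    CRL.otimes a c ≤ CRL.otimes b c := by
  rw [CRL.otimes_comm a c, CRL.otimes_comm b c]; exact otimes_mono_right c h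

lemma otimes_iSup {ι : Sort*} (a : L) (f : ι → L) :
    CRL.otimes a (⨆ i, f i) = ⨆ i, CRL.otimes a (f i) := by
  rw [iSup, CRL.otimes_sSup, iSup_range]

lemma res_inf (a b c : L) : CRL.res a (b ⊓ c) = CRL.res a b ⊓ CRL.res a c :=
  eq_of_forall_le_iff (fun x => by
    simp only [le_inf_iff, le_res_iff])

lemma eqd_inf_self (X F : U → U → L) : eqd X (X ⊓ F) = incl X F := by
  unfold eqd incl bres
  congr 1; ext u; congr 1; ext v
  rw [Pi.inf_apply, Pi.inf_apply,
    res_eq_top_of_le (inf_le_left : X u v ⊓ F u v ≤ X u v), res_inf, res_self]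
  simp

lemma le_fcomp (R P : U → U → L) (u w v : U) :
    CRL.otimes (R u w) (P w v) ≤ fcomp R P u v :=
  le_iSup (fun w => CRL.otimes (R u w) (P w v)) w

lemma fcomp_mono {R R' P P' : U → U → L} (h1 : R ≤ R') (h2 : P ≤ P') :
    fcomp R P ≤ fcomp R' P' := by
  intro u v
  refine iSup_le fun w => le_trans ?_ (le_fcomp R' P' u w v)
  exact le_trans (otimes_mono_right _ (h2 w v)) (otimes_mono_left _ (h1 u w))

lemma trans_apply {X : U → U → L} (hX : IsFuzzyPreorder X) (s t w : U) :
    CRL.otimes (X s t) (X t w) ≤ X s w :=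
  le_trans (le_fcomp X X s t w) (hX.2 s w)

lemma preorder_iInf {ι : Sort*} [Nonempty ι] {P : ι → U → U → L}
    (h : ∀ i, IsFuzzyPreorder (P i)) : IsFuzzyPreorder (⨅ i, P i) := by
  constructor
  · intro u
    simp only [iInf_apply]
    simp [(fun i => (h i).1 u)]
  · intro u v
    simp only [iInf_apply, le_iInf_iff]
    intro i
    refine le_trans ?_ ((h i).2 u v)
    refine fcomp_mono ?_ ?_ u v <;>
      · intro a b; simp only [iInf_apply]; exact iInf_le _ i

lemma preorder_inf {P Q : U → U → L} (hP : IsFuzzyPreorder P) (hQ : IsFuzzyPreorder Q) :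
    IsFuzzyPreorder (P ⊓ Q) := by
  constructor
  · intro u; simp [Pi.inf_apply, hP.1 u, hQ.1 u]
  · intro u v
    simp only [Pi.inf_apply, le_inf_iff]
    constructor
    · exact le_trans (fcomp_mono (inf_le_left) (inf_le_left) u v) (hP.2 u v)
    · exact le_trans (fcomp_mono (inf_le_right) (inf_le_right) u v) (hQ.2 u v)

lemma preorder_lres (Q : U → U → L) : IsFuzzyPreorder (lres Q Q) := by
  constructor
  · intro u; simp [lres, res_self]
  · intro u v
    refine iSup_le fun t => le_iInf fun w => le_res_iff.mpr ?_
    rw [CRL.otimes_assoc]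
    have h1 : CRL.otimes (lres Q Q t v) (Q v w) ≤ Q t w :=
      le_res_iff.mp (iInf_le _ w)
    refine le_trans (otimes_mono_right _ h1) ?_
    exact le_res_iff.mp (iInf_le _ w)

lemma preorder_rres (Q : U → U → L) : IsFuzzyPreorder (rres Q Q) := by
  constructor
  · intro u; simp [rres, res_self]
  · intro u v
    refine iSup_le fun t => le_iInf fun w => le_res_iff.mpr ?_
    have h1 : CRL.otimes (rres Q Q u t) (Q w u) ≤ Q w t :=
      le_res_iff.mp (iInf_le _ w)
    have e : CRL.otimes (CRL.otimes (rres Q Q u t) (rres Q Q t v)) (Q w u)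
        = CRL.otimes (rres Q Q t v) (CRL.otimes (rres Q Q u t) (Q w u)) := by ac_rfl
    rw [e]
    refine le_trans (otimes_mono_right _ h1) ?_
    exact le_res_iff.mp (iInf_le _ w)

lemma preorder_F1 {I : Type*} (S : I → U → U → L) (X : U → U → L) [Nonempty I] :
    IsFuzzyPreorder (F1 S X) :=
  preorder_iInf (fun i => preorder_lres _)

lemma preorder_F2 {I : Type*} (S : I → U → U → L) (X : U → U → L) [Nonempty I] :
    IsFuzzyPreorder (F2 S X) :=
  preorder_iInf (fun i => preorder_rres _)

/-- characterization of x ≤ SD1 -/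
lemma le_SD1_iff {I : Type*} (S : I → U → U → L) (X : U → U → L) (x : L) :
    x ≤ SD1 S X ↔ ∀ i u v t, CRL.otimes x (CRL.otimes (X u t) (S i t v))
      ≤ fcomp (S i) X u v := by
  simp only [SD1, incl, le_iInf_iff, le_res_iff]
  constructor
  · intro h i u v t
    exact le_trans (otimes_mono_right _ (le_fcomp X (S i) u t v)) (h i u v)
  · intro h i u v
    rw [fcomp, otimes_iSup]
    exact iSup_le fun t => h i u v t

lemma le_SD2_iff {I : Type*} (S : I → U → U → L) (X : U → U → L) (x : L) :
    x ≤ SD2 S X ↔ ∀ i u v t, CRL.otimes x (CRL.otimes (S i u t) (X t v))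
      ≤ fcomp X (S i) u v := by
  simp only [SD2, incl, le_iInf_iff, le_res_iff]
  constructor
  · intro h i u v t
    exact le_trans (otimes_mono_right _ (le_fcomp (S i) X u t v)) (h i u v)
  · intro h i u v
    rw [fcomp, otimes_iSup]
    exact iSup_le fun t => h i u v t

lemma le_inclF1_iff {I : Type*} (S : I → U → U → L) (X : U → U → L) (x : L) :
    x ≤ incl X (F1 S X) ↔ ∀ u v i w,
      CRL.otimes (CRL.otimes x (X u v)) (fcomp (S i) X v w) ≤ fcomp (S i) X u w := by
  simp only [incl, F1, lres, le_iInf_iff, le_res_iff, iInf_apply]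

lemma le_inclF2_iff {I : Type*} (S : I → U → U → L) (X : U → U → L) (x : L) :
    x ≤ incl X (F2 S X) ↔ ∀ u v i w,
      CRL.otimes (CRL.otimes x (X u v)) (fcomp X (S i) w u) ≤ fcomp X (S i) w v := by
  simp only [incl, F2, rres, le_iInf_iff, le_res_iff, iInf_apply]

lemma key1 {I : Type*} (S : I → U → U → L) {X : U → U → L}
    (hX : IsFuzzyPreorder X) (x : L) :
    x ≤ SD1 S X ↔ x ≤ incl X (F1 S X) := by
  rw [le_SD1_iff, le_inclF1_iff]
  constructor
  · intro h u v i w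
    rw [fcomp, otimes_iSup]
    refine iSup_le fun t => ?_
    have e : CRL.otimes (CRL.otimes x (X u v)) (CRL.otimes (S i v t) (X t w))
        = CRL.otimes (CRL.otimes x (CRL.otimes (X u v) (S i v t))) (X t w) := by ac_rfl
    rw [e]
    have h1 : CRL.otimes x (CRL.otimes (X u v) (S i v t)) ≤ fcomp (S i) X u t :=
      h i u t v
    refine le_trans (otimes_mono_left _ h1) ?_
    rw [fcomp]
    rw [show CRL.otimes (⨆ s, CRL.otimes (S i u s) (X s t)) (X t w)
        = ⨆ s, CRL.otimes (CRL.otimes (S i u s) (X s t)) (X t w) by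
      rw [CRL.otimes_comm, otimes_iSup]; exact iSup_congr fun s => CRL.otimes_comm _ _]
    refine iSup_le fun s => ?_
    rw [CRL.otimes_assoc]
    exact le_trans (otimes_mono_right _ (trans_apply hX s t w)) (le_fcomp (S i) X u s w)
  · intro h i u v t
    have h1 : S i t v ≤ fcomp (S i) X t v := by
      refine le_trans ?_ (le_fcomp (S i) X t v v)
      rw [hX.1 v, CRL.otimes_top]
    have e : CRL.otimes x (CRL.otimes (X u t) (S i t v))
        = CRL.otimes (CRL.otimes x (X u t)) (S i t v) := by ac_rfl
    rw [e]
    exact le_trans (otimes_mono_right _ h1) (h u t i v)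

lemma key2 {I : Type*} (S : I → U → U → L) {X : U → U → L}
    (hX : IsFuzzyPreorder X) (x : L) :
    x ≤ SD2 S X ↔ x ≤ incl X (F2 S X) := by
  rw [le_SD2_iff, le_inclF2_iff]
  constructor
  · intro h u v i w
    rw [fcomp, otimes_iSup]
    refine iSup_le fun t => ?_
    have e : CRL.otimes (CRL.otimes x (X u v)) (CRL.otimes (X w t) (S i t u))
        = CRL.otimes (X w t) (CRL.otimes x (CRL.otimes (S i t u) (X u v))) := by ac_rfl
    rw [e]
    have h1 : CRL.otimes x (CRL.otimes (S i t u) (X u v)) ≤ fcomp X (S i) t v :=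
      h i t v u
    refine le_trans (otimes_mono_right _ h1) ?_
    rw [fcomp, otimes_iSup]
    refine iSup_le fun s => ?_
    rw [← CRL.otimes_assoc]
    exact le_trans (otimes_mono_left _ (trans_apply hX w t s)) (le_fcomp X (S i) w s v)
  · intro h i u v t
    have h1 : S i u t ≤ fcomp X (S i) u t := by
      refine le_trans ?_ (le_fcomp X (S i) u u t)
      rw [hX.1 u, CRL.otimes_comm, CRL.otimes_top]
    have e : CRL.otimes x (CRL.otimes (S i u t) (X t v))
        = CRL.otimes (CRL.otimes x (X t v)) (S i u t) := by ac_rfl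
    rw [e]
    exact le_trans (otimes_mono_right _ h1) (h t v i u)

lemma incl_inf (X F G : U → U → L) : incl X (F ⊓ G) = incl X F ⊓ incl X G :=
  eq_of_forall_le_iff fun x => by
    simp only [incl, le_inf_iff, le_iInf_iff, Pi.inf_apply, res_inf]
    constructor
    · exact fun h => ⟨fun u v => (h u v).1, fun u v => (h u v).2⟩
    · exact fun h u v => ⟨h.1 u v, h.2 u v⟩

end Aux

/-- For each k ∈ {1,2,3} and the sequence X^k_0 = X₀, X^k_{n+1} = X^k_n ⊓ F_k(X^k_n):
for every x ∈ L and every n, x ≤ SD_k(S)(X^k_n) iff x ≤ (X^k_n ≈ X^k_{n+1}). -/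
theorem stmt18 [Nonempty U] {I : Type*} (S : I → U → U → L) (X0 : U → U → L)
    (hX0 : IsFuzzyPreorder X0) (X1 X2 X3 : ℕ → U → U → L)
    (h10 : X1 0 = X0) (h1 : ∀ n, X1 (n + 1) = X1 n ⊓ F1 S (X1 n))
    (h20 : X2 0 = X0) (h2 : ∀ n, X2 (n + 1) = X2 n ⊓ F2 S (X2 n))
    (h30 : X3 0 = X0) (h3 : ∀ n, X3 (n + 1) = X3 n ⊓ F3 S (X3 n)) :
    (∀ (x : L) (n : ℕ), x ≤ SD1 S (X1 n) ↔ x ≤ eqd (X1 n) (X1 (n + 1))) ∧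
    (∀ (x : L) (n : ℕ), x ≤ SD2 S (X2 n) ↔ x ≤ eqd (X2 n) (X2 (n + 1))) ∧
    (∀ (x : L) (n : ℕ), x ≤ SD3 S (X3 n) ↔ x ≤ eqd (X3 n) (X3 (n + 1))) := by
  have main : ∀ (k : ℕ → U → U → L) (Fk : (I → U → U → L) → (U → U → L) → U → U → L)
      (SDk : (I → U → U → L) → (U → U → L) → L),
      k 0 = X0 → (∀ n, k (n + 1) = k n ⊓ Fk S (k n)) →
      (∀ X : U → U → L, IsFuzzyPreorder (Fk S X)) →
      (∀ (X : U → U → L) (x : L), IsFuzzyPreorder X → (x ≤ SDk S X ↔ x ≤ incl X (Fk S X))) →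
      ∀ (x : L) (n : ℕ), x ≤ SDk S (k n) ↔ x ≤ eqd (k n) (k (n + 1)) := by
    intro k Fk SDk hk0 hks hFpre hkey x n
    have hpre : ∀ m, IsFuzzyPreorder (k m) := by
      intro m
      induction m with
      | zero => rw [hk0]; exact hX0
      | succ m ih => rw [hks m]; exact preorder_inf ih (hFpre (k m))
    rw [hks n, eqd_inf_self]
    exact hkey (k n) x (hpre n)
  by_cases hI : Nonempty I
  · refine ⟨?_, ?_, ?_⟩
    · exact main X1 F1 SD1 h10 h1 (fun X => preorder_F1 S X) (fun X x hX => key1 S hX x)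
    · exact main X2 F2 SD2 h20 h2 (fun X => preorder_F2 S X) (fun X x hX => key2 S hX x)
    · refine main X3 F3 SD3 h30 h3
        (fun X => preorder_inf (preorder_F1 S X) (preorder_F2 S X)) ?_
      intro X x hX
      rw [SD3, F3, incl_inf, le_inf_iff, le_inf_iff, key1 S hX x, key2 S hX x]
  · have hE : IsEmpty I := not_nonempty_iff.mp hI
    have heqd : ∀ X : U → U → L, eqd X X = ⊤ := by
      intro X; simp [eqd, bres, res_self]
    have hF1 : ∀ X : U → U → L, F1 S X = ⊤ := fun X => iInf_of_empty _
    have hF2 : ∀ X : U → U → L, F2 S X = ⊤ := fun X => iInf_of_empty _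
    have hF3 : ∀ X : U → U → L, F3 S X = ⊤ := by
      intro X; rw [F3, hF1, hF2, inf_top_eq]
    have hSD1 : ∀ X : U → U → L, SD1 S X = ⊤ := fun X => iInf_of_empty _
    have hSD2 : ∀ X : U → U → L, SD2 S X = ⊤ := fun X => iInf_of_empty _
    have hSD3 : ∀ X : U → U → L, SD3 S X = ⊤ := by
      intro X; rw [SD3, hSD1, hSD2, inf_top_eq]
    refine ⟨fun x n => ?_, fun x n => ?_, fun x n => ?_⟩
    · rw [h1 n, hF1, inf_top_eq, hSD1, heqd]
    · rw [h2 n, hF2, inf_top_eq, hSD2, heqd]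
    · rw [h3 n, hF3, inf_top_eq, hSD3, heqd]
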